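/- arXiv:1211.0020 — 3 statements merged into one kernel-verified Lean document; each statement's English description precedes it below -/
import Mathlib

section
/- Let q : ℚ[X] be a univariate polynomial, and let m be a positive integer that is a common multiple of the denominators of all coefficients of q. Fix an integer i. If q takes integer values at all integers, then the polynomial b ↦ q(mb + i) has all integer coefficients. -/
/-!
Write `q(mX + i) = r(mX)` with `r = q(X + i)`, so the `j`-th coefficient of `q(mX + i)` is
`mʲ rⱼ`. Since `m q` has integer coefficients, so does `m r`, hence `mʲ rⱼ ∈ ℤ` for `j ≥ 1`;
the constant coefficient is `q(i)`, an integer by hypothesis.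
-/

open Polynomial

theorem Polynomial.comp_mem_lifts {R S : Type*} [Semiring R] [CommSemiring S] {f : R →+* S}
    {p r : S[X]} (hp : p ∈ lifts f) (hr : r ∈ lifts f) : p.comp r ∈ lifts f := by
  obtain ⟨P, rfl⟩ := hp
  obtain ⟨Q, rfl⟩ := hr
  exact ⟨P.comp Q, Polynomial.map_comp f P Q⟩

theorem Polynomial.coeff_comp_C_mul_X_add_C {R : Type*} [CommSemiring R] (p : R[X]) (a b : R)
    (n : ℕ) : (p.comp (C a * X + C b)).coeff n = (p.comp (X + C b)).coeff n * a ^ n := by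
  rw [← comp_C_mul_X_coeff, comp_assoc, add_comp, X_comp, C_comp]

theorem stmt6_general (q : Polynomial ℚ) (m : ℤ)
    (hden : ∀ j : ℕ, ∃ z : ℤ, (m : ℚ) * q.coeff j = (z : ℚ))
    (i : ℤ)
    (hint : ∀ n : ℤ, ∃ z : ℤ, q.eval (n : ℚ) = (z : ℚ)) :
    ∀ j : ℕ, ∃ z : ℤ,
      (q.comp (Polynomial.C (m : ℚ) * Polynomial.X + Polynomial.C (i : ℚ))).coeff j
        = (z : ℚ) := by
  have hmq : C (m : ℚ) * q ∈ lifts (Int.castRingHom ℚ) :=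
    (lifts_iff_coeff_lifts _).2 fun j ↦ by
      obtain ⟨z, hz⟩ := hden j
      exact ⟨z, by simp [hz]⟩
  have hshift : C (m : ℚ) * q.comp (X + C (i : ℚ)) ∈ lifts (Int.castRingHom ℚ) := by
    have hXi : X + C (i : ℚ) ∈ lifts (Int.castRingHom ℚ) :=
      add_mem (X_mem_lifts _) (C_mem_lifts _ i)
    simpa [mul_comp] using comp_mem_lifts hmq hXi
  rintro (_ | j)
  · obtain ⟨z, hz⟩ := hint i
    exact ⟨z, by simpa [coeff_zero_eq_eval_zero, eval_comp] using hz⟩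
  · obtain ⟨z, hz⟩ := (lifts_iff_coeff_lifts _).1 hshift (j + 1)
    refine ⟨z * m ^ j, ?_⟩
    rw [coeff_comp_C_mul_X_add_C, pow_succ', ← mul_assoc, mul_comm _ (m : ℚ), ← coeff_C_mul, ← hz]
    simp

theorem stmt6 (q : Polynomial ℚ) (m : ℤ) (hm : 0 < m)
    (hden : ∀ j : ℕ, ∃ z : ℤ, (m : ℚ) * q.coeff j = (z : ℚ))
    (i : ℤ)
    (hint : ∀ n : ℤ, ∃ z : ℤ, q.eval (n : ℚ) = (z : ℚ)) :
    ∀ j : ℕ, ∃ z : ℤ,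
      (q.comp (Polynomial.C (m : ℚ) * Polynomial.X + Polynomial.C (i : ℚ))).coeff j
        = (z : ℚ) :=
  stmt6_general q m hden i hint
end

section
/- The set S = {(s, s²) : s ∈ ℕ} ⊆ ℕ² cannot be written as a finite union of sets of the form P ∩ (λ + Λ), where each P is a rational polyhedron in ℝ², λ ∈ ℤ², and Λ ⊆ ℤ² is a full-rank lattice (subgroup of finite index). -/
/-!
Suppose the parabola were a finite union of pieces `P ∩ (λ + Λ)`. Every `Λ` contains `N • ℤ²`
for the index `N` of their intersection, so by pigeonhole two parabola points `(2c, 4c²)` and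
`(2d, 4d²)` with `c ≠ d` both multiples of `N` lie in one piece. Their midpoint
`(c + d, 2(c² + d²))` is integral, stays in the convex set `P`, and differs from the first point
by a multiple of `N`, so it stays in the coset too. But it lies strictly above the parabola.
-/

/-- A rational polyhedron in ℝ²: a finite intersection of half-spaces with
integral data. -/
def IsRatPolyhedron (P : Set (ℝ × ℝ)) : Prop :=
  ∃ (m : ℕ) (a : Fin m → ℤ × ℤ) (b : Fin m → ℤ),
    P = {x : ℝ × ℝ | ∀ i, ((a i).1 : ℝ) * x.1 + ((a i).2 : ℝ) * x.2 ≤ (b i : ℝ)}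

theorem IsRatPolyhedron.convex {P : Set (ℝ × ℝ)} (hP : IsRatPolyhedron P) : Convex ℝ P := by
  obtain ⟨m, a, b, rfl⟩ := hP
  rw [Set.ofPred_forall]
  refine convex_iInter fun i => convex_halfSpace_le ⟨fun x y => ?_, fun c x => ?_⟩ _
  · simp only [Prod.fst_add, Prod.snd_add]; ring
  · simp only [Prod.smul_fst, Prod.smul_snd, smul_eq_mul]; ring

theorem Convex.intCast_mem_of_two_nsmul_eq_add {P : Set (ℝ × ℝ)} (hP : Convex ℝ P)
    {p q m : ℤ × ℤ} (hp : ((p.1 : ℝ), (p.2 : ℝ)) ∈ P) (hq : ((q.1 : ℝ), (q.2 : ℝ)) ∈ P)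
    (hm : 2 • m = p + q) : ((m.1 : ℝ), (m.2 : ℝ)) ∈ P := by
  have h₁ : (2 * m.1 : ℝ) = p.1 + q.1 := by exact_mod_cast congrArg Prod.fst hm
  have h₂ : (2 * m.2 : ℝ) = p.2 + q.2 := by exact_mod_cast congrArg Prod.snd hm
  convert hP.midpoint_mem hp hq using 1
  ext <;> simp only [midpoint_eq_smul_add, Prod.smul_fst, Prod.smul_snd, Prod.fst_add,
    Prod.snd_add, smul_eq_mul, invOf_eq_inv] <;> linarith

theorem Convex.intCast_mem_inter_coset {P : Set (ℝ × ℝ)} (hP : Convex ℝ P)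
    {Λ : AddSubgroup (ℤ × ℤ)} {lam p q m : ℤ × ℤ}
    (hp : ((p.1 : ℝ), (p.2 : ℝ)) ∈ P ∧ p - lam ∈ Λ) (hq : ((q.1 : ℝ), (q.2 : ℝ)) ∈ P)
    (hm : 2 • m = p + q) (hmp : m - p ∈ Λ) : ((m.1 : ℝ), (m.2 : ℝ)) ∈ P ∧ m - lam ∈ Λ :=
  ⟨hP.intCast_mem_of_two_nsmul_eq_add hp.1 hq hm, sub_add_sub_cancel m p lam ▸ add_mem hmp hp.2⟩

theorem AddSubgroup.index_iInf_nsmul_mem {ι : Type*} {G : Type*} [AddCommGroup G]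
    (Λ : ι → AddSubgroup G) (i : ι) (g : G) : (⨅ j, Λ j).index • g ∈ Λ i :=
  iInf_le Λ i ((⨅ j, Λ j).nsmul_index_mem g)

theorem two_nsmul_mk_add_two_mul_sq_add_sq (c d : ℤ) :
    2 • (c + d, 2 * (c ^ 2 + d ^ 2)) = (2 * c, (2 * c) ^ 2) + (2 * d, (2 * d) ^ 2) := by
  ext <;> simp <;> ring

theorem mk_add_two_mul_sq_add_sq_sub (c d : ℤ) :
    (c + d, 2 * (c ^ 2 + d ^ 2)) - (2 * c, (2 * c) ^ 2) = (d - c) • (1, 2 * (c + d)) := by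
  ext <;> simp <;> ring

theorem eq_of_two_mul_sq_add_sq_eq_sq {c d : ℤ} (h : 2 * (c ^ 2 + d ^ 2) = (c + d) ^ 2) :
    c = d := by
  have : (c - d) ^ 2 = 0 := by linear_combination h
  exact sub_eq_zero.mp (pow_eq_zero_iff two_ne_zero |>.mp this)

theorem stmt9 :
    ¬ ∃ (k : ℕ) (P : Fin k → Set (ℝ × ℝ)) (Λ : Fin k → AddSubgroup (ℤ × ℤ))
        (lam : Fin k → ℤ × ℤ),
      (∀ i, IsRatPolyhedron (P i)) ∧
      (∀ i, (Λ i).index ≠ 0) ∧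
      {q : ℤ × ℤ | ∃ s : ℕ, q = ((s : ℤ), (s : ℤ) ^ 2)} =
        ⋃ i, {q : ℤ × ℤ | ((q.1 : ℝ), (q.2 : ℝ)) ∈ P i ∧ q - lam i ∈ Λ i} := by
  rintro ⟨k, P, Λ, lam, hP, hidx, hS⟩
  set N := (⨅ i, Λ i).index
  have hpiece (a : ℕ) : ∃ i, ((2 * (N * a) : ℤ), (2 * (N * a) : ℤ) ^ 2) ∈
      {q : ℤ × ℤ | ((q.1 : ℝ), (q.2 : ℝ)) ∈ P i ∧ q - lam i ∈ Λ i} :=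
    Set.mem_iUnion.mp (hS ▸ ⟨2 * (N * a), by push_cast; rfl⟩)
  choose f hf using hpiece
  obtain ⟨a, b, hab, hfab⟩ := Finite.exists_ne_map_eq_of_infinite f
  set c : ℤ := N * a
  set d : ℤ := N * b
  have hmid : (c + d, 2 * (c ^ 2 + d ^ 2)) ∈
      {q : ℤ × ℤ | ((q.1 : ℝ), (q.2 : ℝ)) ∈ P (f a) ∧ q - lam (f a) ∈ Λ (f a)} := by
    refine (hP _).convex.intCast_mem_inter_coset (hf a) (hfab ▸ (hf b).1)
      (two_nsmul_mk_add_two_mul_sq_add_sq c d) ?_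
    rw [mk_add_two_mul_sq_add_sq_sub, show d - c = N * (b - a : ℤ) by ring, mul_smul,
      natCast_zsmul]
    exact AddSubgroup.index_iInf_nsmul_mem Λ _ _
  obtain ⟨s, hs⟩ := (hS ▸ Set.mem_iUnion.mpr ⟨f a, hmid⟩ :
    (c + d, 2 * (c ^ 2 + d ^ 2)) ∈ {q : ℤ × ℤ | ∃ s : ℕ, q = ((s : ℤ), (s : ℤ) ^ 2)})
  obtain ⟨hs₁, hs₂⟩ := Prod.mk.inj hs
  have hcd : c = d := eq_of_two_mul_sq_add_sq_eq_sq (by rw [hs₁, hs₂])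
  have hN : (N : ℤ) ≠ 0 := by exact_mod_cast AddSubgroup.index_iInf_ne_zero hidx
  exact hab (by exact_mod_cast mul_left_cancel₀ hN hcd)
end

section
/- Fix d ≥ 1 and let Φ(d,N) = C(N,0) + C(N,1) + ... + C(N,d). Then the number of connected components of the complement of N hyperplanes in ℝ^d is at most Φ(d,N). -/
open Finset

private lemma linA {d : ℕ} (v : Fin d → ℝ) :
    IsLinearMap ℝ (fun z : Fin d → ℝ => ∑ j, v j * z j) := by
  constructor
  · intro p q; simp [mul_add, Finset.sum_add_distrib]
  · intro c z; simp [Finset.mul_sum, smul_eq_mul, mul_left_comm]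

private lemma patInj {d N : ℕ} (a : Fin N → (Fin d → ℝ)) (b : Fin N → ℝ)
    {S : Set (Fin d → ℝ)} (hS : ∀ x, x ∈ S ↔ ∀ i, ∑ j, a i j * x j ≠ b i)
    (x y : S) (hpat : ∀ i, (b i < ∑ j, a i j * x.1 j ↔ b i < ∑ j, a i j * y.1 j)) :
    (ConnectedComponents.mk x) = ConnectedComponents.mk y := by
  classical
  set C : Set (Fin d → ℝ) :=
    ⋂ i, (if b i < ∑ j, a i j * x.1 j then {z | b i < ∑ j, a i j * z j}
      else {z | ∑ j, a i j * z j < b i}) with hC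
  have hCconv : Convex ℝ C := by
    refine convex_iInter fun i => ?_
    split
    · exact convex_halfSpace_gt (linA (a i)) (b i)
    · exact convex_halfSpace_lt (linA (a i)) (b i)
  have hCS : C ⊆ S := by
    intro z hz
    rw [hS]
    intro i
    have := Set.mem_iInter.1 hz i
    split at this
    · exact ne_of_gt this
    · exact ne_of_lt this
  have hxC : x.1 ∈ C := by
    refine Set.mem_iInter.2 fun i => ?_
    split
    · next h => exact h
    · next h =>
        have := (hS x.1).1 x.2 i
        exact lt_of_le_of_ne (not_lt.1 h) this
  have hyC : y.1 ∈ C := by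
    refine Set.mem_iInter.2 fun i => ?_
    split
    · next h => exact (hpat i).1 h
    · next h =>
        have := (hS y.1).1 y.2 i
        exact lt_of_le_of_ne (not_lt.1 ((not_iff_not.2 (hpat i)).1 h)) this
  have hpre : IsPreconnected (Subtype.val ⁻¹' C : Set S) := by
    rw [← Topology.IsInducing.subtypeVal.isPreconnected_image]
    have : (Subtype.val '' (Subtype.val ⁻¹' C : Set S)) = C := by
      rw [Subtype.image_preimage_coe]
      exact Set.inter_eq_right.2 hCS
    rw [this]
    exact hCconv.isPreconnected
  have hsub := hpre.subset_connectedComponent (x := x) hxC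
  have hy : y ∈ connectedComponent x := hsub hyC
  exact (ConnectedComponents.coe_eq_coe'.2 hy).symm
open Finset

private lemma vc_bound {d N : ℕ} (a : Fin N → (Fin d → ℝ)) (b : Fin N → ℝ)
    (𝒜 : Finset (Finset (Fin N)))
    (h𝒜 : ∀ u ∈ 𝒜, ∃ x : Fin d → ℝ, (∀ i, ∑ j, a i j * x j ≠ b i) ∧
      ∀ i, (i ∈ u ↔ b i < ∑ j, a i j * x j)) :
    𝒜.vcDim ≤ d := by
  classical
  refine Finset.sup_le fun s hs => ?_
  by_contra hlt
  push_neg at hlt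
  obtain ⟨T, hTs, hTcard⟩ := Finset.exists_subset_card_eq (n := d + 1) hlt
  have hTsh : 𝒜.Shatters T := (Finset.mem_shatterer.1 hs).mono_right hTs
  -- linear dependence among (a i), i ∈ T
  have hfr : Module.finrank ℝ (Fin d → ℝ) = d := by
    rw [Module.finrank_pi]; simp
  have hnli : ¬ LinearIndependent ℝ (fun i : T => a i) := by
    intro h
    have := h.fintype_card_le_finrank
    rw [Fintype.card_coe, hTcard, hfr] at this
    omega
  obtain ⟨g, hgsum, i0, hg0⟩ := Fintype.not_linearIndependent_iff.1 hnli
  set c : Fin N → ℝ := fun i => if h : i ∈ T then g ⟨i, h⟩ else 0 with hc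
  have hcs : ∑ i ∈ T, c i • a i = 0 := by
    rw [← Finset.sum_attach T (fun i => c i • a i), ← hgsum, Finset.univ_eq_attach]
    refine Finset.sum_congr rfl fun i _ => ?_
    simp [hc, i.2]
  have hj : ∀ jj, ∑ i ∈ T, c i * a i jj = 0 := by
    intro jj
    have := congrFun hcs jj
    simpa using this
  have hzero : ∀ z : Fin d → ℝ, ∑ i ∈ T, c i * ∑ j, a i j * z j = 0 := by
    intro z
    calc ∑ i ∈ T, c i * ∑ j, a i j * z j
        = ∑ i ∈ T, ∑ j, c i * (a i j * z j) := by simp [Finset.mul_sum]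
      _ = ∑ j, ∑ i ∈ T, c i * (a i j * z j) := Finset.sum_comm
      _ = ∑ j, (∑ i ∈ T, c i * a i j) * z j := by
            refine Finset.sum_congr rfl fun j _ => ?_
            rw [Finset.sum_mul]
            exact Finset.sum_congr rfl fun i _ => by ring
      _ = 0 := by simp [hj]
  have hkey : ∀ z : Fin d → ℝ, ∑ i ∈ T, c i * (∑ j, a i j * z j - b i)
      = -(∑ i ∈ T, c i * b i) := by
    intro z
    simp [mul_sub, Finset.sum_sub_distrib, hzero z]
  have hi0 : (i0 : Fin N) ∈ T := i0.2
  have hc0 : c i0 ≠ 0 := by simpa [hc] using hg0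
  -- positive pattern
  obtain ⟨u, hu, hTu⟩ := hTsh (Finset.filter_subset (fun i => 0 < c i) T)
  obtain ⟨xp, hxpS, hxp⟩ := h𝒜 u hu
  have humem : ∀ i ∈ T, (i ∈ u ↔ 0 < c i) := by
    intro i hi
    have := Finset.ext_iff.1 hTu i
    simp only [Finset.mem_inter, Finset.mem_filter, hi, true_and] at this
    exact this
  have hterm_pos : ∀ i ∈ T, c i ≠ 0 → 0 < c i * (∑ j, a i j * xp j - b i) := by
    intro i hi hci
    rcases hci.lt_or_gt with h | h
    · have hnu : i ∉ u := fun hiu => absurd ((humem i hi).1 hiu) (not_lt.2 h.le)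
      have hlt : ∑ j, a i j * xp j < b i :=
        lt_of_le_of_ne (not_lt.1 (mt (hxp i).2 hnu)) (hxpS i)
      exact mul_pos_of_neg_of_neg h (sub_neg.2 hlt)
    · have hiu : i ∈ u := (humem i hi).2 h
      exact mul_pos h (sub_pos.2 ((hxp i).1 hiu))
  have hsum_pos : 0 < ∑ i ∈ T, c i * (∑ j, a i j * xp j - b i) := by
    refine Finset.sum_pos' (fun i hi => ?_) ⟨i0, hi0, hterm_pos i0 hi0 hc0⟩
    rcases eq_or_ne (c i) 0 with h | h
    · simp [h]
    · exact (hterm_pos i hi h).le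
  -- negative pattern
  obtain ⟨v, hv, hTv⟩ := hTsh (Finset.filter_subset (fun i => c i < 0) T)
  obtain ⟨xm, hxmS, hxm⟩ := h𝒜 v hv
  have hvmem : ∀ i ∈ T, (i ∈ v ↔ c i < 0) := by
    intro i hi
    have := Finset.ext_iff.1 hTv i
    simp only [Finset.mem_inter, Finset.mem_filter, hi, true_and] at this
    exact this
  have hterm_neg : ∀ i ∈ T, c i ≠ 0 → c i * (∑ j, a i j * xm j - b i) < 0 := by
    intro i hi hci
    rcases hci.lt_or_gt with h | h
    · have hiv : i ∈ v := (hvmem i hi).2 h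
      exact mul_neg_of_neg_of_pos h (sub_pos.2 ((hxm i).1 hiv))
    · have hnv : i ∉ v := fun hiv => absurd ((hvmem i hi).1 hiv) (not_lt.2 h.le)
      have hlt : ∑ j, a i j * xm j < b i :=
        lt_of_le_of_ne (not_lt.1 (mt (hxm i).2 hnv)) (hxmS i)
      exact mul_neg_of_pos_of_neg h (sub_neg.2 hlt)
  have hsum_neg : ∑ i ∈ T, c i * (∑ j, a i j * xm j - b i) < 0 := by
    have h0 : 0 < ∑ i ∈ T, -(c i * (∑ j, a i j * xm j - b i)) := by
      refine Finset.sum_pos' (fun i hi => ?_) ⟨i0, hi0, by linarith [hterm_neg i0 hi0 hc0]⟩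
      rcases eq_or_ne (c i) 0 with h | h
      · simp [h]
      · linarith [hterm_neg i hi h]
    rw [Finset.sum_neg_distrib] at h0
    linarith
  have h1 := hkey xp
  have h2 := hkey xm
  linarith

theorem stmt12 (d N : ℕ) (hd : 1 ≤ d)
    (a : Fin N → (Fin d → ℝ)) (b : Fin N → ℝ) (ha : ∀ i, a i ≠ 0)
    (S : Set (Fin d → ℝ))
    (hS : S = (⋃ i, {x : Fin d → ℝ | ∑ j, a i j * x j = b i})ᶜ) :
    Finite (ConnectedComponents S) ∧
      Nat.card (ConnectedComponents S) ≤ ∑ i ∈ Finset.range (d + 1), N.choose i := by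
  classical
  have hSmem : ∀ x, x ∈ S ↔ ∀ i, ∑ j, a i j * x j ≠ b i := by
    intro x; rw [hS]; simp
  set pat : S → Finset (Fin N) :=
    (fun x => Finset.univ.filter fun i => b i < ∑ j, a i j * x.1 j) with hpatdef
  have hfin : (Set.range pat).Finite := Set.toFinite _
  set 𝒜 : Finset (Finset (Fin N)) := hfin.toFinset with h𝒜def
  have hmem𝒜 : ∀ u, u ∈ 𝒜 ↔ ∃ x, pat x = u := by
    intro u; simp [h𝒜def, Set.Finite.mem_toFinset]
  have hrep : ∀ u : {u // u ∈ 𝒜}, ∃ x : S, pat x = ↑u := fun u => (hmem𝒜 u).1 u.2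
  have hInj : ∀ x y : S, pat x = pat y →
      (ConnectedComponents.mk x) = ConnectedComponents.mk y := by
    intro x y hxy
    refine patInj a b hSmem x y fun i => ?_
    have := Finset.ext_iff.1 hxy i
    simpa [hpatdef] using this
  let h : {u // u ∈ 𝒜} → ConnectedComponents S := fun u => ConnectedComponents.mk (hrep u).choose
  have hsurj : Function.Surjective h := by
    intro cc
    obtain ⟨y, rfl⟩ := ConnectedComponents.surjective_coe cc
    have hy : pat y ∈ 𝒜 := (hmem𝒜 _).2 ⟨y, rfl⟩
    exact ⟨⟨pat y, hy⟩, hInj _ _ ((hrep ⟨pat y, hy⟩).choose_spec)⟩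
  constructor
  · exact Finite.of_surjective h hsurj
  · have hcard1 : Nat.card (ConnectedComponents S) ≤ 𝒜.card := by
      have := Nat.card_le_card_of_surjective h hsurj
      simpa [Nat.card_eq_fintype_card, Fintype.card_coe] using this
    have hvc : 𝒜.vcDim ≤ d := by
      refine vc_bound a b 𝒜 fun u hu => ?_
      obtain ⟨x, hx⟩ := (hmem𝒜 u).1 hu
      exact ⟨x.1, (hSmem x.1).1 x.2, fun i => by rw [← hx]; simp [hpatdef]⟩
    calc Nat.card (ConnectedComponents S) ≤ 𝒜.card := hcard1
      _ ≤ 𝒜.shatterer.card := Finset.card_le_card_shatterer 𝒜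
      _ ≤ ∑ k ∈ Finset.Iic 𝒜.vcDim, (Fintype.card (Fin N)).choose k :=
          Finset.card_shatterer_le_sum_vcDim
      _ ≤ ∑ k ∈ Finset.Iic d, N.choose k := by
          simp only [Fintype.card_fin]
          exact Finset.sum_le_sum_of_subset (Finset.Iic_subset_Iic.2 hvc)
      _ = ∑ i ∈ Finset.range (d + 1), N.choose i := by
          congr 1; ext k; simp [Nat.lt_succ_iff]
end
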